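/- arXiv:1609.07496 — 2 statements merged into one kernel-verified Lean document; each statement's English description precedes it below -/
import Mathlib

section
/- For the two-state Davies evolution p(t) = q + (p(0)−q)e^{−At} with A > 0, 0 < q < 1, 0 < p(0) < 1, the entropy production bound with constant k = 2 holds: d(p(0)‖q) − d(p(t)‖q) ≥ d(p(0)‖p(2t)) for all t ≥ 0, where d is the binary relative entropy. -/
/-!
Write `s = e^{-At} ∈ [0, 1]` and `T p = q + (p - q) s` (`relax q s p`), so that `p(t) = T p₀` and
`p(2t) = T (T p₀)`. Since `d(p₀‖q) - d(p₀‖r) = p₀ log (r/q) + (1 - p₀) log ((1 - r)/(1 - q))`,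
the claim is `d(T p₀‖q) ≤ p₀ log (T² p₀/q) + (1 - p₀) log ((1 - T² p₀)/(1 - q))`.
Writing `T p₀ = p₀ T 1 + (1 - p₀) T 0`, the left side splits into a `p₀`- and a
`(1 - p₀)`-average of the logarithms of `T p₀ / q` and `(1 - T p₀)/(1 - q)`, and concavity of
`log` bounds each average by the logarithm of the corresponding mean. Because `T` is
reversible with respect to `q` (detailed balance), these means are exactly `T² p₀ / q` and
`(1 - T² p₀)/(1 - q)`.
-/

/-- Binary Kullback–Leibler divergence. -/
noncomputable def dKL (p r : ℝ) : ℝ :=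
  p * Real.log (p / r) + (1 - p) * Real.log ((1 - p) / (1 - r))

open Real Set

noncomputable def relax (q s p : ℝ) : ℝ := q + (p - q) * s

lemma relax_relax (q s s' p : ℝ) : relax q s (relax q s' p) = relax q (s * s') p := by
  unfold relax; ring

lemma relax_mem {S : Set ℝ} (hS : Convex ℝ S) {q s p : ℝ} (hq : q ∈ S) (hp : p ∈ S)
    (hs : s ∈ Icc 0 1) : relax q s p ∈ S := by
  simpa [relax, smul_eq_mul, mul_comm] using hS.add_smul_sub_mem hq hp hs

lemma mul_log_add_mul_log_le_log {x y w : ℝ} (hx : 0 < x) (hy : 0 < y) (hw : w ∈ Icc 0 1) :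
    w * log x + (1 - w) * log y ≤ log (w * x + (1 - w) * y) := by
  simpa [smul_eq_mul] using
    strictConcaveOn_log_Ioi.concaveOn.2 (mem_Ioi.2 hx) (mem_Ioi.2 hy) hw.1 (sub_nonneg.2 hw.2)
      (add_sub_cancel w 1)

lemma mul_log_div_sub_mul_log_div (x : ℝ) {y z : ℝ} (hy : y ≠ 0) (hz : z ≠ 0) :
    x * log (x / y) - x * log (x / z) = x * log (z / y) := by
  rcases eq_or_ne x 0 with rfl | hx
  · simp
  · rw [log_div hx hy, log_div hx hz, log_div hz hy]; ring

lemma dKL_sub_dKL (p : ℝ) {q r : ℝ} (hq : q ≠ 0) (hq' : 1 - q ≠ 0) (hr : r ≠ 0)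
    (hr' : 1 - r ≠ 0) :
    dKL p q - dKL p r = p * log (r / q) + (1 - p) * log ((1 - r) / (1 - q)) := by
  rw [← mul_log_div_sub_mul_log_div p hq hr, ← mul_log_div_sub_mul_log_div (1 - p) hq' hr']
  unfold dKL; ring

lemma dKL_relax_le {q s p : ℝ} (hq : q ∈ Ioo 0 1) (hs : s ∈ Icc 0 1) (hp : p ∈ Ioo 0 1) :
    dKL (relax q s p) q ≤ p * log (relax q s (relax q s p) / q)
      + (1 - p) * log ((1 - relax q s (relax q s p)) / (1 - q)) := by
  obtain ⟨hq0, hq1⟩ := hq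
  have ha := relax_mem (convex_Ioo 0 1) ⟨hq0, hq1⟩ hp hs
  set a := relax q s p
  set r := relax q s a
  set L₁ := log (a / q)
  set L₀ := log ((1 - a) / (1 - q))
  have hx : 0 < a / q := div_pos ha.1 hq0
  have hy : 0 < (1 - a) / (1 - q) := div_pos (sub_pos.2 ha.2) (sub_pos.2 hq1)
  have hw (x : ℝ) (hx : x ∈ Icc 0 1) : relax q s x ∈ Icc 0 1 :=
    relax_mem (convex_Icc 0 1) ⟨hq0.le, hq1.le⟩ hx hs
  -- detailed balance: the means are `r / q` and `(1 - r) / (1 - q)`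
  have from_one : relax q s 1 * L₁ + (1 - relax q s 1) * L₀ ≤ log (r / q) := by
    convert mul_log_add_mul_log_le_log hx hy (hw 1 ⟨zero_le_one, le_rfl⟩) using 2
    simp only [r, a, relax]; field_simp; ring
  have from_zero : relax q s 0 * L₁ + (1 - relax q s 0) * L₀ ≤ log ((1 - r) / (1 - q)) := by
    convert mul_log_add_mul_log_le_log hx hy (hw 0 ⟨le_rfl, zero_le_one⟩) using 2
    have : 1 - q ≠ 0 := (sub_pos.2 hq1).ne'
    simp only [r, a, relax]; field_simp; ring
  have ha_split : a = p * relax q s 1 + (1 - p) * relax q s 0 := by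
    simp only [a, relax]; ring
  calc dKL a q
      = a * L₁ + (1 - a) * L₀ := rfl
    _ = p * (relax q s 1 * L₁ + (1 - relax q s 1) * L₀)
        + (1 - p) * (relax q s 0 * L₁ + (1 - relax q s 0) * L₀) := by
        rw [ha_split]; ring
    _ ≤ p * log (r / q) + (1 - p) * log ((1 - r) / (1 - q)) := by
        gcongr
        · exact hp.1.le
        · exact sub_nonneg.2 hp.2.le

/-- Entropy-production bound with constant `k = 2` for the classical two-state Davies
evolution `p(t) = q + (p(0)−q)e^{−At}`:
`d(p(0)‖q) − d(p(t)‖q) ≥ d(p(0)‖p(2t))` for all `t ≥ 0`. -/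
theorem two_state_davies_entropy_production_bound
    (A q p0 : ℝ) (hA : 0 < A) (hq0 : 0 < q) (hq1 : q < 1)
    (hp0 : 0 < p0) (hp1 : p0 < 1)
    (pt : ℝ → ℝ) (hpt : ∀ t, pt t = q + (p0 - q) * Real.exp (-A * t)) :
    ∀ t : ℝ, 0 ≤ t →
      dKL p0 q - dKL (pt t) q ≥ dKL p0 (pt (2 * t)) := by
  intro t ht
  set s := exp (-A * t)
  have hs : s ∈ Icc 0 1 :=
    ⟨(exp_pos _).le, exp_le_one_iff.2 (by nlinarith)⟩
  have hpt1 : pt t = relax q s p0 := hpt t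
  have hpt2 : pt (2 * t) = relax q s (relax q s p0) := by
    rw [hpt, relax_relax, ← exp_add]; unfold relax; ring_nf
  have hr := relax_mem (convex_Ioo 0 1) ⟨hq0, hq1⟩ (relax_mem (convex_Ioo 0 1) ⟨hq0, hq1⟩
    ⟨hp0, hp1⟩ hs) hs
  have hsplit := dKL_sub_dKL p0 hq0.ne' (sub_pos.2 hq1).ne' hr.1.ne' (sub_pos.2 hr.2).ne'
  have hkey := dKL_relax_le ⟨hq0, hq1⟩ hs ⟨hp0, hp1⟩
  rw [hpt1, hpt2]
  linarith
end

section
/- Let Ω be a positive definite density matrix with eigenvalues pᵢ and eigenbasis |i⟩, and let L be a time-translation symmetric superoperator with respect to Ω (L(Ω^{it}XΩ^{−it}) = Ω^{it}L(X)Ω^{−it} for all t ∈ R). Then the two quantum detailed balance conditions L(X) = Ω L†(Ω^{−1} X) (GNS/Kossakowski form) and L(X) = Ω^{1/2} L†(Ω^{−1/2} X Ω^{−1/2}) Ω^{1/2} (KMS form) are equivalent. -/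
/-!
In the eigenbasis of `Ω` both conditions are statements about single entries of the images of
the matrix units `E_ab`: the GNS condition reads `L(E_ab)_ij = (p_i / p_a) L†(E_ab)_ij` and the
KMS condition `L(E_ab)_ij = √(p_i p_j / (p_a p_b)) L†(E_ab)_ij`. Time-translation symmetry
multiplies `L(E_ab)_ij` by the phase `(p_a p_j / (p_b p_i))^{it}` for every `t`, so this entry
vanishes unless `p_i p_b = p_j p_a`, and under that relation the two coefficients agree. Off this
support either condition forces `L†(E_ab)_ij = 0`, because both coefficients are nonzero.
-/

open Matrix Complex

section Sandwich

variable {n R : Type*} [Fintype n] [DecidableEq n] [CommSemiring R]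

theorem Matrix.diagonal_mul_single_mul_diagonal (v w : n → R) (a b : n) (c : R) :
    diagonal v * single a b c * diagonal w = single a b (v a * c * w b) := by
  ext i j
  simp only [mul_diagonal, diagonal_mul, single_apply]
  split_ifs <;> simp_all

theorem Matrix.diagonal_mul_mul_diagonal_apply (v w : n → R) (A : Matrix n n R) (i j : n) :
    (diagonal v * A * diagonal w) i j = v i * A i j * w j := by
  rw [mul_diagonal, diagonal_mul]

theorem Matrix.inv_diagonal_of_ne_zero {K : Type*} [Field K] {v : n → K} (hv : ∀ i, v i ≠ 0) :
    (diagonal v)⁻¹ = diagonal fun i => (v i)⁻¹ := inv_eq_right_inv <| by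
  rw [diagonal_mul_diagonal, ← diagonal_one]
  exact congrArg diagonal (funext fun i => mul_inv_cancel₀ (hv i))

theorem LinearMap.map_diagonal_mul_single_one_mul_diagonal (M : Module.End R (Matrix n n R))
    (v w : n → R) (a b : n) :
    M (diagonal v * Matrix.single a b 1 * diagonal w) =
      (v a * w b) • M (Matrix.single a b 1) := by
  rw [diagonal_mul_single_mul_diagonal, ← map_smul, smul_single, smul_eq_mul, mul_one, mul_one]

theorem forall_eq_diagonal_sandwich_iff (L M : Module.End R (Matrix n n R)) (u v w z : n → R) :
    (∀ X, L X = diagonal u * M (diagonal v * X * diagonal w) * diagonal z) ↔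
      ∀ a b i j, L (single a b 1) i j = u i * v a * w b * z j * M (single a b 1) i j := by
  let F : Module.End R (Matrix n n R) := LinearMap.mulRight R (diagonal z) ∘ₗ
    LinearMap.mulLeft R (diagonal u) ∘ₗ M ∘ₗ LinearMap.mulRight R (diagonal w) ∘ₗ
    LinearMap.mulLeft R (diagonal v)
  have hF : ∀ X, F X = diagonal u * M (diagonal v * X * diagonal w) * diagonal z := fun _ => rfl
  have hF_single : ∀ a b i j,
      F (single a b 1) i j = u i * v a * w b * z j * M (single a b 1) i j := by
    intro a b i j
    rw [hF, M.map_diagonal_mul_single_one_mul_diagonal, mul_smul_comm, smul_mul_assoc,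
      Matrix.smul_apply, diagonal_mul_mul_diagonal_apply, smul_eq_mul]
    ring
  simp_rw [← hF, ← hF_single, ← LinearMap.ext_iff]
  refine ⟨fun h a b i j => h ▸ rfl, fun h => ext_linearMap R fun a b => ?_⟩
  exact LinearMap.ext_ring (Matrix.ext (h a b))

theorem mul_apply_single_apply_eq_of_diagonal_covariant
    {L : Module.End R (Matrix n n R)} {v w : n → R}
    (hL : ∀ X, L (diagonal v * X * diagonal w) = diagonal v * L X * diagonal w) (a b i j : n) :
    v a * w b * L (single a b 1) i j = v i * L (single a b 1) i j * w j := by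
  have h := congrFun₂ (hL (single a b 1)) i j
  rwa [L.map_diagonal_mul_single_one_mul_diagonal, Matrix.smul_apply, smul_eq_mul,
    diagonal_mul_mul_diagonal_apply] at h

end Sandwich

theorem eq_mul_of_eq_mul_of_support {K : Type*} [MulZeroClass K] [NoZeroDivisors K]
    {l m c₁ c₂ : K} (hc₁ : c₁ ≠ 0) (hc : l ≠ 0 → c₁ = c₂) (h : l = c₁ * m) :
    l = c₂ * m := by
  by_cases hl : l = 0
  · obtain rfl : m = 0 := (mul_eq_zero.mp (hl ▸ h).symm).resolve_left hc₁
    rw [hl, mul_zero]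
  · rwa [← hc hl]

theorem Complex.ofReal_cpow_I_mul {x : ℝ} (hx : 0 < x) (t : ℝ) :
    (x : ℂ) ^ (I * t) = exp ((t * Real.log x : ℝ) * I) := by
  rw [cpow_def_of_ne_zero (ofReal_ne_zero.mpr hx.ne'), ← ofReal_log hx.le]
  push_cast
  ring_nf

theorem Complex.eq_of_forall_exp_mul_I_eq {c d : ℝ}
    (h : ∀ t : ℝ, exp ((t * c : ℝ) * I) = exp ((t * d : ℝ) * I)) : c = d := by
  by_contra hcd
  have hcd' : (c : ℂ) - d ≠ 0 := by exact_mod_cast sub_ne_zero.mpr hcd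
  have hshift : exp ((Real.pi / (c - d) * c : ℝ) * I) =
      exp ((Real.pi / (c - d) * d : ℝ) * I) * exp (Real.pi * I) := by
    rw [← exp_add]
    congr 1
    push_cast
    field_simp
    ring
  rw [h, exp_pi_mul_I, mul_neg_one, eq_neg_iff_add_eq_zero, ← two_mul] at hshift
  exact exp_ne_zero _ ((mul_eq_zero.mp hshift).resolve_left two_ne_zero)

theorem mul_eq_mul_of_apply_single_apply_ne_zero {n : Type*} [Fintype n] [DecidableEq n]
    {p : n → ℝ} (hp : ∀ i, 0 < p i) {L : Module.End ℂ (Matrix n n ℂ)}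
    (hL : ∀ (t : ℝ) (X : Matrix n n ℂ),
      L (diagonal (fun i => (p i : ℂ) ^ (I * t)) * X
          * diagonal (fun i => (p i : ℂ) ^ (I * ((-t : ℝ) : ℂ))))
        = diagonal (fun i => (p i : ℂ) ^ (I * t)) * L X
          * diagonal (fun i => (p i : ℂ) ^ (I * ((-t : ℝ) : ℂ))))
    {a b i j : n} (hne : L (single a b 1) i j ≠ 0) : p i * p b = p j * p a := by
  have hlog : Real.log (p a) - Real.log (p b) = Real.log (p i) - Real.log (p j) := by
    refine eq_of_forall_exp_mul_I_eq fun t => ?_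
    have h := mul_apply_single_apply_eq_of_diagonal_covariant (hL t) a b i j
    simp only [ofReal_cpow_I_mul (hp _), mul_right_comm _ (L _ i j)] at h
    calc exp ((t * (Real.log (p a) - Real.log (p b)) : ℝ) * I)
        = exp ((t * Real.log (p a) : ℝ) * I) * exp ((-t * Real.log (p b) : ℝ) * I) := by
          rw [← exp_add]; push_cast; ring_nf
      _ = exp ((t * Real.log (p i) : ℝ) * I) * exp ((-t * Real.log (p j) : ℝ) * I) :=
          mul_right_cancel₀ hne h
      _ = exp ((t * (Real.log (p i) - Real.log (p j)) : ℝ) * I) := by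
          rw [← exp_add]; push_cast; ring_nf
  have hpos : ∀ k l, 0 < p k * p l := fun k l => mul_pos (hp k) (hp l)
  refine Real.log_injOn_pos (hpos i b) (hpos j a) ?_
  rw [Real.log_mul (hp i).ne' (hp b).ne', Real.log_mul (hp j).ne' (hp a).ne']
  linarith

namespace Real

theorem mul_inv_eq_sqrt_mul_inv_mul_inv_mul_sqrt {x y z w : ℝ} (hx : 0 < x) (hy : 0 < y)
    (hz : 0 < z) (hw : 0 < w) (h : x * w = y * z) :
    x * z⁻¹ = √x * (√z)⁻¹ * (√w)⁻¹ * √y := by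
  have hsq : √x * √w = √y * √z := by rw [← sqrt_mul hx.le, ← sqrt_mul hy.le, h]
  have hz' : √z ≠ 0 := (sqrt_pos.mpr hz).ne'
  have hw' : √w ≠ 0 := (sqrt_pos.mpr hw).ne'
  field_simp
  linear_combination (-(√z * √w)) * mul_self_sqrt hx.le + √x * √z * hsq
    + √x * √y * mul_self_sqrt hz.le

end Real

theorem qdb_gns_iff_kms_of_tts_general {d : ℕ}
    (p : Fin d → ℝ) (hp : ∀ i, 0 < p i)
    (Ω : Matrix (Fin d) (Fin d) ℂ)
    (hΩ : Ω = Matrix.diagonal fun i => ((p i : ℝ) : ℂ))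
    (L Ldag : Module.End ℂ (Matrix (Fin d) (Fin d) ℂ))
    (Om : ℝ → Matrix (Fin d) (Fin d) ℂ)
    (hOm : ∀ t : ℝ, Om t = Matrix.diagonal fun i => ((p i : ℂ) ^ (Complex.I * (t : ℂ))))
    (hTTS : ∀ (t : ℝ) (X : Matrix (Fin d) (Fin d) ℂ),
      L (Om t * X * Om (-t)) = Om t * L X * Om (-t)) :
    (∀ X, L X = Ω * Ldag (Ω⁻¹ * X))
      ↔ (∀ X, L X = (Matrix.diagonal fun i => ((Real.sqrt (p i) : ℝ) : ℂ))
          * Ldag ((Matrix.diagonal fun i => (((Real.sqrt (p i))⁻¹ : ℝ) : ℂ)) * X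
              * (Matrix.diagonal fun i => (((Real.sqrt (p i))⁻¹ : ℝ) : ℂ)))
          * (Matrix.diagonal fun i => ((Real.sqrt (p i) : ℝ) : ℂ))) := by
  simp only [hOm] at hTTS
  have hp' : ∀ k, (p k : ℂ) ≠ 0 := fun k => ofReal_ne_zero.mpr (hp k).ne'
  have hGNS : ∀ X, Ω * Ldag (Ω⁻¹ * X) = diagonal (fun i => (p i : ℂ))
      * Ldag (diagonal (fun i => (p i : ℂ)⁻¹) * X * diagonal 1) * diagonal 1 := by
    simp [hΩ, inv_diagonal_of_ne_zero hp']
  simp_rw [hGNS, forall_eq_diagonal_sandwich_iff]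
  refine forall₄_congr fun a b i j => ?_
  have hcoeff : p i * p b = p j * p a → (p i : ℂ) * (p a : ℂ)⁻¹ * 1 * 1 =
      ((√(p i) : ℝ) : ℂ) * (((√(p a))⁻¹ : ℝ) : ℂ) * (((√(p b))⁻¹ : ℝ) : ℂ) * ((√(p j) : ℝ) : ℂ) := by
    intro h
    rw [mul_one, mul_one]
    exact_mod_cast (Real.mul_inv_eq_sqrt_mul_inv_mul_inv_mul_sqrt (hp i) (hp j) (hp a) (hp b) h)
  have hcoeff_of_ne_zero := fun hne => hcoeff (mul_eq_mul_of_apply_single_apply_ne_zero hp hTTS hne)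
  have hsqrt : ∀ k, √(p k) ≠ 0 := fun k => (Real.sqrt_pos.mpr (hp k)).ne'
  exact ⟨eq_mul_of_eq_mul_of_support (by simp [hp']) hcoeff_of_ne_zero,
    eq_mul_of_eq_mul_of_support (by simp [hsqrt]) fun hne => (hcoeff_of_ne_zero hne).symm⟩

/-- For a superoperator `L` which is time-translation symmetric with respect to a positive
definite density matrix `Ω = diag(p)`, the GNS/Kossakowski detailed balance condition
`L(X) = Ω L†(Ω⁻¹ X)` and the KMS detailed balance condition
`L(X) = Ω^{1/2} L†(Ω^{−1/2} X Ω^{−1/2}) Ω^{1/2}` are equivalent. -/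
theorem qdb_gns_iff_kms_of_tts {d : ℕ}
    (p : Fin d → ℝ) (hp : ∀ i, 0 < p i) (hptr : ∑ i, p i = 1)
    (Ω : Matrix (Fin d) (Fin d) ℂ)
    (hΩ : Ω = Matrix.diagonal fun i => ((p i : ℝ) : ℂ))
    (L Ldag : Module.End ℂ (Matrix (Fin d) (Fin d) ℂ))
    (hadj : ∀ A B, (Aᴴ * L B).trace = ((Ldag A)ᴴ * B).trace)
    (Om : ℝ → Matrix (Fin d) (Fin d) ℂ)
    (hOm : ∀ t : ℝ, Om t = Matrix.diagonal fun i => ((p i : ℂ) ^ (Complex.I * (t : ℂ))))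
    (hTTS : ∀ (t : ℝ) (X : Matrix (Fin d) (Fin d) ℂ),
      L (Om t * X * Om (-t)) = Om t * L X * Om (-t)) :
    (∀ X, L X = Ω * Ldag (Ω⁻¹ * X))
      ↔ (∀ X, L X = (Matrix.diagonal fun i => ((Real.sqrt (p i) : ℝ) : ℂ))
          * Ldag ((Matrix.diagonal fun i => (((Real.sqrt (p i))⁻¹ : ℝ) : ℂ)) * X
              * (Matrix.diagonal fun i => (((Real.sqrt (p i))⁻¹ : ℝ) : ℂ)))
          * (Matrix.diagonal fun i => ((Real.sqrt (p i) : ℝ) : ℂ))) :=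
  qdb_gns_iff_kms_of_tts_general p hp Ω hΩ L Ldag Om hOm hTTS
end
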